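/- arXiv:1101.1159 — 2 statements merged into one kernel-verified Lean document; each statement's English description precedes it below -/
import Mathlib

section
/- Fix ι ∈ {identity, complex conjugation} on ℂ and ε ∈ {1,−1}. Let (V,B) be an H-module with an H-invariant nondegenerate (ι,ε)-symmetric form B. For an irreducible H-module π, let I_{π,π^{ι,*}} denote the sum of all irreducible invariant subspaces of V isomorphic either to π or to π^{ι,*}. Then V is the direct sum of the distinct subspaces I_{π,π^{ι,*}}, these subspaces are pairwise B-orthogonal, and the restriction of B to each I_{π,π^{ι,*}} is nondegenerate. -/
open scoped Classical

variable {H V : Type*}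

/-- `U` is invariant under the representation `ρ`. -/
def Invt [Group H] [AddCommGroup V] [Module ℂ V] (ρ : Representation ℂ H V)
    (U : Submodule ℂ V) : Prop :=
  ∀ (h : H) (v : V), v ∈ U → ρ h v ∈ U

/-- `V` is a semisimple `H`-module. -/
def Semisimple [Group H] [AddCommGroup V] [Module ℂ V] (ρ : Representation ℂ H V) : Prop :=
  ∀ U : Submodule ℂ V, Invt ρ U → ∃ U', Invt ρ U' ∧ IsCompl U U'

/-- `U` is an irreducible invariant subspace. -/
def IrredSub [Group H] [AddCommGroup V] [Module ℂ V] (ρ : Representation ℂ H V)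
    (U : Submodule ℂ V) : Prop :=
  Invt ρ U ∧ U ≠ ⊥ ∧ ∀ U' ≤ U, Invt ρ U' → U' = ⊥ ∨ U' = U

/-- `U` and `W` are isomorphic as `H`-modules. -/
def RepIso [Group H] [AddCommGroup V] [Module ℂ V] (ρ : Representation ℂ H V)
    (U W : Submodule ℂ V) : Prop :=
  ∃ e : U ≃ₗ[ℂ] W, ∀ (h : H) (v : V) (hv : v ∈ U) (hv' : ρ h v ∈ U),
    ((e ⟨ρ h v, hv'⟩ : W) : V) = ρ h ((e ⟨v, hv⟩ : W) : V)

/-- `U` is isomorphic, as an `H`-module, to the `σ`-twisted (conjugate-)dual of `W`. -/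
def RepDualIso [Group H] [AddCommGroup V] [Module ℂ V] (σ : ℂ →+* ℂ)
    (ρ : Representation ℂ H V) (U W : Submodule ℂ V) : Prop :=
  ∃ e : U ≃ₗ[ℂ] (W →ₛₗ[σ] ℂ), ∀ (h : H) (v : V) (hv : v ∈ U) (hv' : ρ h v ∈ U)
    (w : V) (hw : w ∈ W) (hw' : ρ h⁻¹ w ∈ W),
    e ⟨ρ h v, hv'⟩ ⟨w, hw⟩ = e ⟨v, hv⟩ ⟨ρ h⁻¹ w, hw'⟩

/-! The restriction of an invariant form to a pair of irreducible subspaces `U₁ × U₂` is either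
zero or perfect: its kernels are invariant subspaces, hence trivial by irreducibility, so a
nonzero pairing identifies `U₂` with the `σ`-dual of `U₁`. Since `σ` is an involution, the double
`σ`-dual is the identity, and "isomorphic or dual" is an equivalence relation on irreducibles.
Hence irreducibles in different components `I_{π,π^{ι,*}}` are `B`-orthogonal. By semisimplicity
the components span `V`, and a family of mutually orthogonal subspaces spanning the space of a
nondegenerate form is independent, with the form nondegenerate on each member. -/

section OrthogonalFamily

variable {R M N ι : Type*} [CommRing R] [AddCommGroup M] [Module R M] [AddCommGroup N]
  [Module R N] {I₁ I₂ : R →+* R} {B : M →ₛₗ[I₁] M →ₛₗ[I₂] N} {C : ι → Submodule R M}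

namespace LinearMap.SeparatingLeft

theorem eq_zero_of_forall_mem (hB : B.SeparatingLeft) (htop : ⨆ i, C i = ⊤) {v : M}
    (hv : ∀ i, ∀ w ∈ C i, B v w = 0) : v = 0 :=
  hB v fun w => (iSup_le fun i x hx => hv i x hx : ⨆ i, C i ≤ LinearMap.ker (B v))
    (htop.ge (Submodule.mem_top (x := w)))

theorem eq_zero_of_forall_mem_self (hB : B.SeparatingLeft) (htop : ⨆ i, C i = ⊤)
    (horth : Pairwise fun i j => ∀ x ∈ C i, ∀ y ∈ C j, B x y = 0) {i : ι} {v : M}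
    (hv : v ∈ C i) (hvi : ∀ w ∈ C i, B v w = 0) : v = 0 :=
  hB.eq_zero_of_forall_mem htop fun j => by
    obtain rfl | hij := eq_or_ne i j
    exacts [hvi, horth hij v hv]

theorem iSupIndep (hB : B.SeparatingLeft) (htop : ⨆ i, C i = ⊤)
    (horth : Pairwise fun i j => ∀ x ∈ C i, ∀ y ∈ C j, B x y = 0) : iSupIndep C := by
  intro i
  rw [Submodule.disjoint_def]
  intro v hv hv'
  refine hB.eq_zero_of_forall_mem htop fun j w hw => ?_
  obtain rfl | hij := eq_or_ne i j
  · have : ⨆ (k) (_ : k ≠ i), C k ≤ LinearMap.ker (B.flip w) :=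
      iSup₂_le fun k hki x hx => horth hki x hx w hw
    exact this hv'
  · exact horth hij v hv w hw

theorem isInternal [DecidableEq ι] (hB : B.SeparatingLeft) (htop : ⨆ i, C i = ⊤)
    (horth : Pairwise fun i j => ∀ x ∈ C i, ∀ y ∈ C j, B x y = 0) : DirectSum.IsInternal C :=
  DirectSum.isInternal_submodule_of_iSupIndep_of_iSup_eq_top (hB.iSupIndep htop horth) htop

end LinearMap.SeparatingLeft

theorem forall_mem_sSup_apply_eq_zero {s t : Set (Submodule R M)}
    (h : ∀ U ∈ s, ∀ W ∈ t, ∀ x ∈ U, ∀ y ∈ W, B x y = 0) :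
    ∀ x ∈ sSup s, ∀ y ∈ sSup t, B x y = 0 := by
  have hs : ∀ U ∈ s, U ≤ (sSup t).orthogonalBilin B.flip := fun U hU x hx y hy =>
    (sSup_le fun W hW y hy => h U hU W hW x hx y hy : sSup t ≤ LinearMap.ker (B x)) hy
  exact fun x hx => sSup_le hs hx

end OrthogonalFamily

section SemilinearDual

variable {K M : Type*} [Field K] (σ : K →+* K) [AddCommGroup M] [Module K M]

noncomputable def Module.Basis.semilinearDualEquivFun {ι : Type*} [Fintype ι]
    (b : Module.Basis ι K M) : (M →ₛₗ[σ] K) ≃ₗ[K] (ι → K) where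
  toFun f i := f (b i)
  invFun c := ∑ i, c i • σ.toSemilinearMap.comp (b.coord i)
  map_add' f g := rfl
  map_smul' a f := rfl
  left_inv f := b.ext fun j => by
    simp [Module.Basis.coord_apply, Finsupp.single_apply, mul_comm]
  right_inv c := by
    ext j
    simp [Module.Basis.coord_apply, Finsupp.single_apply, apply_ite σ]

variable [FiniteDimensional K M]

instance : FiniteDimensional K (M →ₛₗ[σ] K) :=
  .equiv ((Module.finBasis K M).semilinearDualEquivFun σ).symm

theorem finrank_semilinearDual : Module.finrank K (M →ₛₗ[σ] K) = Module.finrank K M := by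
  simp [((Module.finBasis K M).semilinearDualEquivFun σ).finrank_eq]

end SemilinearDual

theorem eq_zero_of_forall_semilinearMap_apply_eq_zero {K M : Type*} [Field K] {σ : K →+* K}
    [AddCommGroup M] [Module K M] {m : M} (h : ∀ f : M →ₛₗ[σ] K, f m = 0) : m = 0 :=
  (Module.forall_dual_apply_eq_zero_iff K m).mp fun φ =>
    σ.injective (by simpa using h (σ.toSemilinearMap.comp φ))

namespace Representation

variable {K G W W₁ W₂ W₃ : Type*} [Field K] [Group G] (σ : K →+* K)
  [AddCommGroup W] [Module K W] [AddCommGroup W₁] [Module K W₁]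
  [AddCommGroup W₂] [Module K W₂] [AddCommGroup W₃] [Module K W₃]

def semilinearDual (τ : Representation K G W) : Representation K G (W →ₛₗ[σ] K) where
  toFun g := LinearMap.lcompₛₗ K K σ (τ g⁻¹)
  map_one' := by ext; simp
  map_mul' g h := by ext; simp

@[simp]
theorem semilinearDual_apply (τ : Representation K G W) (g : G) (f : W →ₛₗ[σ] K) (w : W) :
    τ.semilinearDual σ g f w = f (τ g⁻¹ w) :=
  rfl

variable {σ} {τ : Representation K G W} {τ₁ : Representation K G W₁}
  {τ₂ : Representation K G W₂} {τ₃ : Representation K G W₃}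

@[simp]
theorem Equiv.isIntertwining (φ : τ₁.Equiv τ₂) (g : G) (v : W₁) : φ (τ₁ g v) = τ₂ g (φ v) :=
  IntertwiningMap.isIntertwining τ₁ τ₂ φ.toIntertwiningMap g v

def Equiv.semilinearDual (φ : τ₁.Equiv τ₂) :
    (τ₂.semilinearDual σ).Equiv (τ₁.semilinearDual σ) :=
  .mk (φ.toLinearEquiv.symm.arrowCongr (LinearEquiv.refl K K)) fun g => by
    ext f w
    simp

/-- Evaluation `w ↦ (f ↦ σ (f w))`, which is `K`-linear because `σ` is an involution. -/
noncomputable def semilinearDualDualEquiv (hσ : Function.Involutive σ) [FiniteDimensional K W] :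
    τ.Equiv ((τ.semilinearDual σ).semilinearDual σ) :=
  let ev : W →ₗ[K] (W →ₛₗ[σ] K) →ₛₗ[σ] K :=
    LinearMap.mk₂'ₛₗ (RingHom.id K) σ (fun w f => σ (f w)) (by simp) (by simp [hσ _])
      (by simp) (by simp)
  have hev : Function.Injective ev := fun v w hvw =>
    sub_eq_zero.mp <| eq_zero_of_forall_semilinearMap_apply_eq_zero fun f =>
      σ.injective <| by simpa [ev, sub_eq_zero] using LinearMap.congr_fun hvw f
  .mk (ev.linearEquivOfInjective hev (by simp only [finrank_semilinearDual])) fun g => by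
    ext w f
    simp [ev]

def EquivOrDual (σ : K →+* K) (τ₁ : Representation K G W₁) (τ₂ : Representation K G W₂) : Prop :=
  Nonempty (τ₁.Equiv τ₂) ∨ Nonempty (τ₁.Equiv (τ₂.semilinearDual σ))

theorem EquivOrDual.symm (hσ : Function.Involutive σ) [FiniteDimensional K W₂]
    (h : EquivOrDual σ τ₁ τ₂) : EquivOrDual σ τ₂ τ₁ := by
  rcases h with ⟨⟨φ⟩⟩ | ⟨⟨φ⟩⟩
  · exact .inl ⟨φ.symm⟩
  · exact .inr ⟨(semilinearDualDualEquiv hσ).trans φ.semilinearDual⟩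

theorem EquivOrDual.trans (hσ : Function.Involutive σ) [FiniteDimensional K W₃]
    (h₁₂ : EquivOrDual σ τ₁ τ₂) (h₂₃ : EquivOrDual σ τ₂ τ₃) : EquivOrDual σ τ₁ τ₃ := by
  rcases h₁₂ with ⟨⟨φ⟩⟩ | ⟨⟨φ⟩⟩ <;> rcases h₂₃ with ⟨⟨ψ⟩⟩ | ⟨⟨ψ⟩⟩
  · exact .inl ⟨φ.trans ψ⟩
  · exact .inr ⟨φ.trans ψ⟩
  · exact .inr ⟨φ.trans ψ.symm.semilinearDual⟩
  · exact .inl ⟨φ.trans (ψ.semilinearDual.symm.trans (semilinearDualDualEquiv hσ).symm)⟩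

end Representation

section Subspace

variable [Group H] [AddCommGroup V] [Module ℂ V] {ρ : Representation ℂ H V}

def Invt.restrict {U : Submodule ℂ V} (hU : Invt ρ U) : Representation ℂ H U :=
  Subrepresentation.toRepresentation ⟨U, fun g v => hU g v⟩

@[simp]
theorem Invt.coe_restrict_apply {U : Submodule ℂ V} (hU : Invt ρ U) (h : H) (u : U) :
    (hU.restrict h u : V) = ρ h u :=
  rfl

theorem repIso_iff {U W : Submodule ℂ V} (hU : Invt ρ U) (hW : Invt ρ W) :
    RepIso ρ U W ↔ Nonempty (hU.restrict.Equiv hW.restrict) where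
  mp := fun ⟨e, he⟩ =>
    ⟨.mk e fun h => LinearMap.ext fun u => Subtype.ext (he h u u.2 (hU h u u.2))⟩
  mpr := fun ⟨φ⟩ =>
    ⟨φ.toLinearEquiv, fun h v hv _ => congrArg Subtype.val (φ.isIntertwining h ⟨v, hv⟩)⟩

theorem repDualIso_iff (σ : ℂ →+* ℂ) {U W : Submodule ℂ V} (hU : Invt ρ U) (hW : Invt ρ W) :
    RepDualIso σ ρ U W ↔ Nonempty (hU.restrict.Equiv (hW.restrict.semilinearDual σ)) where
  mp := fun ⟨e, he⟩ =>
    ⟨.mk e fun h => LinearMap.ext fun u => LinearMap.ext fun w =>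
      he h u u.2 (hU h u u.2) w w.2 (hW h⁻¹ w w.2)⟩
  mpr := fun ⟨φ⟩ =>
    ⟨φ.toLinearEquiv, fun h v hv _ w hw _ =>
      LinearMap.congr_fun (φ.isIntertwining h ⟨v, hv⟩) ⟨w, hw⟩⟩

theorem repIso_or_repDualIso_iff (σ : ℂ →+* ℂ) {U W : Submodule ℂ V} (hU : Invt ρ U)
    (hW : Invt ρ W) :
    RepIso ρ U W ∨ RepDualIso σ ρ U W ↔ hU.restrict.EquivOrDual σ hW.restrict :=
  or_congr (repIso_iff hU hW) (repDualIso_iff σ hU hW)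

end Subspace

section Pairing

variable [Group H] [AddCommGroup V] [Module ℂ V] {ρ : Representation ℂ H V} {σ : ℂ →+* ℂ}
  {B : V →ₛₗ[σ] V →ₗ[ℂ] ℂ} {U₁ U₂ : Submodule ℂ V} {v w : V}

theorem Invt.inf (hU₁ : Invt ρ U₁) (hU₂ : Invt ρ U₂) : Invt ρ (U₁ ⊓ U₂) :=
  fun h _ hx => ⟨hU₁ h _ hx.1, hU₂ h _ hx.2⟩

theorem Invt.orthogonalBilin (hBinv : ∀ (h : H) (v w : V), B (ρ h v) (ρ h w) = B v w)
    (hU : Invt ρ U₁) : Invt ρ (U₁.orthogonalBilin B) := by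
  intro h y hy x hx
  rw [← ρ.self_inv_apply h x, hBinv]
  exact hy _ (hU h⁻¹ x hx)

theorem IrredSub.inf_orthogonalBilin_eq_bot
    (hBinv : ∀ (h : H) (v w : V), B (ρ h v) (ρ h w) = B v w) (hU₁ : Invt ρ U₁)
    (hU₂ : IrredSub ρ U₂) (hv : v ∈ U₁) (hw : w ∈ U₂) (hvw : B v w ≠ 0) :
    U₂ ⊓ U₁.orthogonalBilin B = ⊥ :=
  (hU₂.2.2 _ inf_le_left (hU₂.1.inf (hU₁.orthogonalBilin hBinv))).resolve_right
    fun h => hvw ((h.ge hw).2 v hv)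

theorem IrredSub.injective_flip_domRestrict₁₂
    (hBinv : ∀ (h : H) (v w : V), B (ρ h v) (ρ h w) = B v w) (hU₁ : Invt ρ U₁)
    (hU₂ : IrredSub ρ U₂) (hv : v ∈ U₁) (hw : w ∈ U₂) (hvw : B v w ≠ 0) :
    Function.Injective (B.domRestrict₁₂ U₁ U₂).flip := by
  rw [← LinearMap.ker_eq_bot, eq_bot_iff]
  intro x hx
  have hx' : (x : V) ∈ U₂ ⊓ U₁.orthogonalBilin B :=
    ⟨x.2, fun y hy => LinearMap.congr_fun hx ⟨y, hy⟩⟩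
  simpa [hU₂.inf_orthogonalBilin_eq_bot hBinv hU₁ hv hw hvw] using hx'

theorem IrredSub.nonempty_equiv_semilinearDual [FiniteDimensional ℂ V]
    (hBinv : ∀ (h : H) (v w : V), B (ρ h v) (ρ h w) = B v w) (hB : B.IsRefl)
    (hU₁ : IrredSub ρ U₁) (hU₂ : IrredSub ρ U₂) (hv : v ∈ U₁) (hw : w ∈ U₂)
    (hvw : B v w ≠ 0) :
    Nonempty (hU₂.1.restrict.Equiv (hU₁.1.restrict.semilinearDual σ)) := by
  have inj₁₂ := hU₂.injective_flip_domRestrict₁₂ hBinv hU₁.1 hv hw hvw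
  have inj₂₁ := hU₁.injective_flip_domRestrict₁₂ hBinv hU₂.1 hw hv (mt (hB _ _) hvw)
  have hrank : Module.finrank ℂ U₂ = Module.finrank ℂ (U₁ →ₛₗ[σ] ℂ) := by
    have le₁₂ := LinearMap.finrank_le_finrank_of_injective inj₁₂
    have le₂₁ := LinearMap.finrank_le_finrank_of_injective inj₂₁
    rw [finrank_semilinearDual] at le₁₂ le₂₁ ⊢
    exact le_antisymm le₁₂ le₂₁
  refine ⟨.mk (LinearMap.linearEquivOfInjective _ inj₁₂ hrank) fun h => ?_⟩
  ext x u
  simp only [LinearMap.coe_comp, LinearEquiv.coe_coe, Function.comp_apply,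
    LinearMap.linearEquivOfInjective_apply, Representation.semilinearDual_apply,
    LinearMap.flip_apply, LinearMap.domRestrict₁₂_apply, Invt.coe_restrict_apply]
  rw [← ρ.self_inv_apply h u, hBinv, ρ.self_inv_apply]

end Pairing

section Components

variable [Group H] [AddCommGroup V] [Module ℂ V] {ρ : Representation ℂ H V}

theorem invt_sSup {s : Set (Submodule ℂ V)} (hs : ∀ U ∈ s, Invt ρ U) : Invt ρ (sSup s) :=
  fun h => show sSup s ≤ (sSup s).comap (ρ h) from
    sSup_le fun U hU _ hx => Submodule.comap_mono (le_sSup hU) (hs U hU h _ hx)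

theorem Invt.exists_irredSub_le [FiniteDimensional ℂ V] {U : Submodule ℂ V} (hU : Invt ρ U)
    (hne : U ≠ ⊥) : ∃ W ≤ U, IrredSub ρ W := by
  obtain ⟨W, ⟨hWU, hW, hW0⟩, hmin⟩ :=
    wellFounded_lt.has_min {W | W ≤ U ∧ Invt ρ W ∧ W ≠ ⊥} ⟨U, le_rfl, hU, hne⟩
  exact ⟨W, hWU, hW, hW0, fun W' hW'W hW' => or_iff_not_imp_left.mpr fun hW'0 =>
    hW'W.eq_of_not_lt (hmin W' ⟨hW'W.trans hWU, hW', hW'0⟩)⟩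

theorem sSup_irredSub_eq_top [FiniteDimensional ℂ V] (hss : Semisimple ρ) :
    sSup {U | IrredSub ρ U} = ⊤ := by
  obtain ⟨M, hM, hcompl⟩ := hss (sSup {U | IrredSub ρ U}) (invt_sSup fun U hU => hU.1)
  obtain rfl | hM0 := eq_or_ne M ⊥
  · exact eq_top_of_isCompl_bot hcompl
  obtain ⟨W, hWM, hW⟩ := hM.exists_irredSub_le hM0
  exact absurd (le_bot_iff.mp (hcompl.disjoint (le_sSup hW) hWM)) hW.2.1

variable (ρ) (σ : ℂ →+* ℂ)

/-- The paper's `I_{W, W^{σ,*}}`. -/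
def biIsotypicComponent (W : Submodule ℂ V) : Submodule ℂ V :=
  sSup {U | IrredSub ρ U ∧ (RepIso ρ U W ∨ RepDualIso σ ρ U W)}

def biIsotypicComponents : Set (Submodule ℂ V) :=
  {C | ∃ W, IrredSub ρ W ∧ C = biIsotypicComponent ρ σ W}

variable {ρ σ}

theorem le_biIsotypicComponent {W : Submodule ℂ V} (hW : IrredSub ρ W) :
    W ≤ biIsotypicComponent ρ σ W :=
  le_sSup ⟨hW, .inl ⟨LinearEquiv.refl ℂ W, fun _ _ _ _ => rfl⟩⟩

theorem sSup_biIsotypicComponents [FiniteDimensional ℂ V] (hss : Semisimple ρ) :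
    sSup (biIsotypicComponents ρ σ) = ⊤ :=
  eq_top_iff.mpr <| (sSup_irredSub_eq_top hss).ge.trans <| sSup_le fun W hW =>
    (le_biIsotypicComponent hW).trans (le_sSup ⟨W, hW, rfl⟩)

variable [FiniteDimensional ℂ V]

theorem biIsotypicComponent_eq (hσ : Function.Involutive σ) {W₁ W₂ : Submodule ℂ V}
    (hW₁ : IrredSub ρ W₁) (hW₂ : IrredSub ρ W₂)
    (h : hW₁.1.restrict.EquivOrDual σ hW₂.1.restrict) :
    biIsotypicComponent ρ σ W₁ = biIsotypicComponent ρ σ W₂ := by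
  refine congrArg sSup (Set.ext fun U => and_congr_right fun hU => ?_)
  rw [repIso_or_repDualIso_iff σ hU.1 hW₁.1, repIso_or_repDualIso_iff σ hU.1 hW₂.1]
  exact ⟨fun hU₁ => hU₁.trans hσ h, fun hU₂ => hU₂.trans hσ (h.symm hσ)⟩

theorem forall_mem_biIsotypicComponent_apply_eq_zero (hσ : Function.Involutive σ)
    {B : V →ₛₗ[σ] V →ₗ[ℂ] ℂ} (hBinv : ∀ (h : H) (v w : V), B (ρ h v) (ρ h w) = B v w)
    (hB : B.IsRefl) {W₁ W₂ : Submodule ℂ V} (hW₁ : IrredSub ρ W₁) (hW₂ : IrredSub ρ W₂)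
    (hne : biIsotypicComponent ρ σ W₁ ≠ biIsotypicComponent ρ σ W₂) :
    ∀ x ∈ biIsotypicComponent ρ σ W₁, ∀ y ∈ biIsotypicComponent ρ σ W₂, B x y = 0 := by
  refine forall_mem_sSup_apply_eq_zero fun U₁ ⟨hU₁, h₁⟩ U₂ ⟨hU₂, h₂⟩ x hx y hy => ?_
  by_contra hxy
  rw [repIso_or_repDualIso_iff σ hU₁.1 hW₁.1] at h₁
  rw [repIso_or_repDualIso_iff σ hU₂.1 hW₂.1] at h₂
  have h₂₁ : hU₂.1.restrict.EquivOrDual σ hU₁.1.restrict :=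
    .inr (hU₁.nonempty_equiv_semilinearDual hBinv hB hU₂ hx hy hxy)
  have hW₁₂ := ((h₁.symm hσ).trans hσ (h₂₁.symm hσ)).trans hσ h₂
  exact hne (biIsotypicComponent_eq hσ hW₁ hW₂ hW₁₂)

end Components

theorem stmt_4_general [Group H] [AddCommGroup V] [Module ℂ V] [FiniteDimensional ℂ V]
    (σ : ℂ →+* ℂ) (hσ : σ = RingHom.id ℂ ∨ σ = starRingEnd ℂ)
    (ε : ℂ)
    (ρ : Representation ℂ H V) (hss : Semisimple ρ)
    (B : V → V → ℂ)
    (hB1 : ∀ v v' w, B (v + v') w = B v w + B v' w)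
    (hB2 : ∀ v w w', B v (w + w') = B v w + B v w')
    (hB3 : ∀ (a : ℂ) (v w : V), B (a • v) w = σ a * B v w)
    (hB4 : ∀ (a : ℂ) (v w : V), B v (a • w) = a * B v w)
    (hBinv : ∀ (h : H) (v w : V), B (ρ h v) (ρ h w) = B v w)
    (hBsym : ∀ v w, B w v = ε * σ (B v w))
    (hBnd : ∀ v, (∀ w, B v w = 0) → v = 0) :
    -- the set of bi-isotypical components of V
    let S : Set (Submodule ℂ V) :=
      {C | ∃ W : Submodule ℂ V, IrredSub ρ W ∧
        C = sSup {U | IrredSub ρ U ∧ (RepIso ρ U W ∨ RepDualIso σ ρ U W)}}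
    -- V is the direct sum of its distinct bi-isotypical components
    DirectSum.IsInternal (fun C : S => (C : Submodule ℂ V)) ∧
    -- distinct components are pairwise orthogonal
    (∀ C ∈ S, ∀ D ∈ S, C ≠ D → ∀ v ∈ C, ∀ w ∈ D, B v w = 0) ∧
    -- the restriction of B to each component is nondegenerate
    (∀ C ∈ S, ∀ v ∈ C, (∀ w ∈ C, B v w = 0) → v = 0) := by
  intro S
  have hσ' : Function.Involutive σ := by
    rcases hσ with rfl | rfl
    exacts [fun _ => rfl, Complex.conj_conj]
  let Bₗ : V →ₛₗ[σ] V →ₗ[ℂ] ℂ := LinearMap.mk₂'ₛₗ σ (RingHom.id ℂ) B hB1 hB3 hB2 hB4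
  have hBrefl : Bₗ.IsRefl := fun v w h => by
    change B v w = 0 at h
    change B w v = 0
    rw [hBsym, h, map_zero, mul_zero]
  have hBsep : Bₗ.SeparatingLeft := hBnd
  have horth : ∀ C ∈ S, ∀ D ∈ S, C ≠ D → ∀ v ∈ C, ∀ w ∈ D, B v w = 0 := by
    rintro _ ⟨W₁, hW₁, rfl⟩ _ ⟨W₂, hW₂, rfl⟩ hne
    exact forall_mem_biIsotypicComponent_apply_eq_zero (B := Bₗ) hσ' hBinv hBrefl hW₁ hW₂ hne
  have htop : ⨆ C : S, (C : Submodule ℂ V) = ⊤ := by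
    rw [← sSup_eq_iSup']
    exact sSup_biIsotypicComponents hss
  have horth' : Pairwise fun C D : S => ∀ v ∈ (C : Submodule ℂ V), ∀ w ∈ (D : Submodule ℂ V),
      Bₗ v w = 0 :=
    fun C D hCD => horth C C.2 D D.2 (Subtype.val_injective.ne hCD)
  exact ⟨hBsep.isInternal htop horth', horth,
    fun C hC v hv => hBsep.eq_zero_of_forall_mem_self htop horth' (i := ⟨C, hC⟩) hv⟩

/-- A nondegenerate `(ι,ε)`-symmetric `H`-module `(V,B)` is the direct sum
of its distinct bi-isotypical components `I_{π,π^{ι,*}}`; these are pairwise `B`-orthogonal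
and the restriction of `B` to each of them is nondegenerate. -/
theorem stmt_4 [Group H] [AddCommGroup V] [Module ℂ V] [FiniteDimensional ℂ V]
    (σ : ℂ →+* ℂ) (hσ : σ = RingHom.id ℂ ∨ σ = starRingEnd ℂ)
    (ε : ℂ) (hε : ε = 1 ∨ ε = -1)
    (ρ : Representation ℂ H V) (hss : Semisimple ρ)
    (B : V → V → ℂ)
    (hB1 : ∀ v v' w, B (v + v') w = B v w + B v' w)
    (hB2 : ∀ v w w', B v (w + w') = B v w + B v w')
    (hB3 : ∀ (a : ℂ) (v w : V), B (a • v) w = σ a * B v w)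
    (hB4 : ∀ (a : ℂ) (v w : V), B v (a • w) = a * B v w)
    (hBinv : ∀ (h : H) (v w : V), B (ρ h v) (ρ h w) = B v w)
    (hBsym : ∀ v w, B w v = ε * σ (B v w))
    (hBnd : ∀ v, (∀ w, B v w = 0) → v = 0) :
    -- the set of bi-isotypical components of V
    let S : Set (Submodule ℂ V) :=
      {C | ∃ W : Submodule ℂ V, IrredSub ρ W ∧
        C = sSup {U | IrredSub ρ U ∧ (RepIso ρ U W ∨ RepDualIso σ ρ U W)}}
    -- V is the direct sum of its distinct bi-isotypical components
    DirectSum.IsInternal (fun C : S => (C : Submodule ℂ V)) ∧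
    -- distinct components are pairwise orthogonal
    (∀ C ∈ S, ∀ D ∈ S, C ≠ D → ∀ v ∈ C, ∀ w ∈ D, B v w = 0) ∧
    -- the restriction of B to each component is nondegenerate
    (∀ C ∈ S, ∀ v ∈ C, (∀ w ∈ C, B v w = 0) → v = 0) :=
  stmt_4_general σ hσ ε ρ hss B hB1 hB2 hB3 hB4 hBinv hBsym hBnd
end

section
/- Let n = p + q and let D be the diagonal n×n matrix with p entries equal to 1 and q entries equal to −1, so that the Hermitian form v ↦ conj(v)^⊤ D v on ℂⁿ has signature s = p − q. On the space Mat_n(ℂ), viewed as the space of complex bilinear forms on ℂⁿ, define the Hermitian form S(b, b') = Trace(conj(b)^⊤ D^{-1} b' D^{-1}). Then: (a) the signature of S on all of Mat_n(ℂ) equals s²; (b) the signature of S restricted to symmetric matrices (b^⊤ = b) equals (s² + n)/2; (c) the signature of S restricted to skew-symmetric matrices (b^⊤ = −b) equals (s² − n)/2. -/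
/-!
With `D = diag(ε)`, `ε = (1,…,1,−1,…,−1)`, the form is diagonal in the matrix units:
`S(b, b) = ∑ ε_i ε_j |b_ij|²`. Hence it is positive definite on the matrices supported on the
entries with `ε_i = ε_j` (`p² + q²` of them) and negative definite on those supported on the
entries with `ε_i ≠ ε_j` (`2pq` of them). Both patterns are symmetric, so the splitting is
compatible with transposition. For a symmetric pattern `P`, the symmetric and skew-symmetric
matrices supported on `P` have total dimension `#P`, and negating the entries below the diagonal
exchanges them once the diagonal is removed, so their dimensions differ by the number of diagonal
entries of `P`. This gives `p(p+1)/2 + q(q+1)/2` against `pq` on symmetric matrices and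
`p(p-1)/2 + q(q-1)/2` against `pq` on skew-symmetric ones.
-/

open Module Matrix

/-- The matrix `D = diag(1,…,1,−1,…,−1)` with `p` ones and `q` minus ones. -/
noncomputable def sigD (p q : ℕ) : Matrix (Fin (p + q)) (Fin (p + q)) ℂ :=
  Matrix.diagonal (fun i => if (i : ℕ) < p then 1 else -1)

/-- The Hermitian form `S(b,b') = Trace(conj(b)ᵀ D⁻¹ b' D⁻¹)` on `n × n` complex matrices,
viewed as the space of complex bilinear forms on `ℂⁿ` with the Hermitian form of
signature `p − q`. -/
noncomputable def bilFormHerm (p q : ℕ)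
    (b b' : Matrix (Fin (p + q)) (Fin (p + q)) ℂ) : ℂ :=
  ((b.map (starRingEnd ℂ))ᵀ * (sigD p q)⁻¹ * b' * (sigD p q)⁻¹).trace

open Finset

section Counting

variable {ι : Type*} [Fintype ι]

theorem card_filter_diag [DecidableEq ι] (P : ι → ι → Prop) [DecidableRel P] :
    #{x : ι × ι | x.1 = x.2 ∧ P x.1 x.2} = #{i | P i i} := by
  have h : ({x : ι × ι | x.1 = x.2 ∧ P x.1 x.2} : Finset _) =
      ({i | P i i} : Finset ι).diag := by
    ext ⟨i, j⟩
    simp only [mem_filter, mem_univ, true_and, mem_diag]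
    constructor
    · rintro ⟨rfl, h⟩
      exact ⟨h, rfl⟩
    · rintro ⟨h, rfl⟩
      exact ⟨rfl, h⟩
  rw [h, diag_card]

theorem card_filter_iff (s : ι → Prop) [DecidablePred s] :
    #{x : ι × ι | (s x.1 ↔ s x.2)} = #{i | s i} ^ 2 + #{i | ¬ s i} ^ 2 := by
  classical
  have h : filter (fun x : ι × ι => (s x.1 ↔ s x.2)) univ =
      (univ.filter s ×ˢ univ.filter s ∪ univ.filter (¬ s ·) ×ˢ univ.filter (¬ s ·) :
        Finset (ι × ι)) := by
    ext ⟨i, j⟩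
    by_cases hi : s i <;> by_cases hj : s j <;> simp [hi, hj]
  rw [h, card_union_of_disjoint, card_product, card_product, sq, sq]
  exact disjoint_product.2 (.inl (disjoint_filter_filter_not _ _ _))

theorem card_filter_not_iff (s : ι → Prop) [DecidablePred s] :
    #{x : ι × ι | ¬ (s x.1 ↔ s x.2)} = 2 * (#{i | s i} * #{i | ¬ s i}) := by
  classical
  have h : filter (fun x : ι × ι => ¬ (s x.1 ↔ s x.2)) univ =
      (univ.filter s ×ˢ univ.filter (¬ s ·) ∪ univ.filter (¬ s ·) ×ˢ univ.filter s :
        Finset (ι × ι)) := by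
    ext ⟨i, j⟩
    by_cases hi : s i <;> by_cases hj : s j <;> simp [hi, hj]
  rw [h, card_union_of_disjoint, card_product, card_product]
  · ring
  exact disjoint_product.2 (.inl (disjoint_filter_filter_not _ _ _))

end Counting

namespace Matrix

section SupportPattern

variable (K : Type*) {ι : Type*} [Field K]

def supportedOn (P : ι → ι → Prop) : Submodule K (Matrix ι ι K) where
  carrier := {b | ∀ i j, ¬ P i j → b i j = 0}
  add_mem' ha hb i j h := by simp [ha i j h, hb i j h]
  zero_mem' _ _ _ := rfl
  smul_mem' c b hb i j h := by simp [hb i j h]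

def symmetricSubmodule (ι : Type*) : Submodule K (Matrix ι ι K) where
  carrier := {b | bᵀ = b}
  add_mem' ha hb := by simp_all [transpose_add]
  zero_mem' := transpose_zero
  smul_mem' c b hb := by simp_all [transpose_smul]

def skewSubmodule (ι : Type*) : Submodule K (Matrix ι ι K) where
  carrier := {b | bᵀ = -b}
  add_mem' ha hb := by simp_all [transpose_add, add_comm]
  zero_mem' := by simp
  smul_mem' c b hb := by simp_all [transpose_smul]

def indicatorMatrix (P : ι → ι → Prop) [DecidableRel P] : Matrix ι ι K :=
  of fun i j => if P i j then 1 else 0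

variable {K}

theorem mem_supportedOn {P : ι → ι → Prop} {b : Matrix ι ι K} :
    b ∈ supportedOn K P ↔ ∀ i j, ¬ P i j → b i j = 0 := Iff.rfl

theorem mem_symmetricSubmodule {b : Matrix ι ι K} :
    b ∈ symmetricSubmodule K ι ↔ bᵀ = b := Iff.rfl

theorem mem_skewSubmodule {b : Matrix ι ι K} : b ∈ skewSubmodule K ι ↔ bᵀ = -b := Iff.rfl

def supportedOnEquiv (P : ι → ι → Prop) [DecidableRel P] :
    supportedOn K P ≃ₗ[K] ({x : ι × ι // P x.1 x.2} → K) where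
  toFun b x := (b : Matrix ι ι K) x.1.1 x.1.2
  map_add' _ _ := rfl
  map_smul' _ _ := rfl
  invFun f := ⟨of fun i j => if h : P i j then f ⟨(i, j), h⟩ else 0, fun _ _ h => dif_neg h⟩
  left_inv b := by
    ext i j
    by_cases h : P i j
    · exact dif_pos h
    · exact (dif_neg h).trans (b.2 i j h).symm
  right_inv f := funext fun x => dif_pos x.2

theorem finrank_supportedOn [Fintype ι] (P : ι → ι → Prop) [DecidableRel P] :
    finrank K (supportedOn K P) = #{x : ι × ι | P x.1 x.2} := by
  rw [(supportedOnEquiv P).finrank_eq, finrank_fintype_fun_eq_card, Fintype.card_subtype]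

theorem supportedOn_inf_supportedOn (P Q : ι → ι → Prop) :
    supportedOn K P ⊓ supportedOn K Q = supportedOn K fun i j => P i j ∧ Q i j := by
  ext b
  simp only [Submodule.mem_inf, mem_supportedOn, not_and_or]
  exact ⟨fun ⟨hP, hQ⟩ i j h => h.elim (hP i j) (hQ i j),
    fun h => ⟨fun i j hP => h i j (.inl hP), fun i j hQ => h i j (.inr hQ)⟩⟩

theorem disjoint_supportedOn_not (P : ι → ι → Prop) :
    Disjoint (supportedOn K P) (supportedOn K fun i j => ¬ P i j) := by
  rw [Submodule.disjoint_def]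
  intro b hP hnP
  ext i j
  by_cases h : P i j
  · exact hnP i j (not_not_intro h)
  · exact hP i j h

theorem hadamard_mem_supportedOn {P : ι → ι → Prop} {b : Matrix ι ι K}
    (hb : b ∈ supportedOn K P) (A : Matrix ι ι K) : b ⊙ A ∈ supportedOn K P :=
  fun i j h => by simp [hb i j h]

theorem hadamard_indicatorMatrix_mem (P : ι → ι → Prop) [DecidableRel P]
    (b : Matrix ι ι K) : b ⊙ indicatorMatrix K P ∈ supportedOn K P :=
  fun i j h => by simp [indicatorMatrix, h]

theorem hadamard_mem_symmetricSubmodule {b A : Matrix ι ι K}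
    (hb : b ∈ symmetricSubmodule K ι) (hA : Aᵀ = A) : b ⊙ A ∈ symmetricSubmodule K ι := by
  rw [mem_symmetricSubmodule, transpose_hadamard, hb, hA]

theorem hadamard_mem_skewSubmodule {b A : Matrix ι ι K} (hb : b ∈ skewSubmodule K ι)
    (hA : Aᵀ = A) : b ⊙ A ∈ skewSubmodule K ι := by
  rw [mem_skewSubmodule, transpose_hadamard, hb, hA]
  ext
  simp

theorem transpose_indicatorMatrix {P : ι → ι → Prop} [DecidableRel P]
    (hP : ∀ i j, P i j → P j i) : (indicatorMatrix K P)ᵀ = indicatorMatrix K P := by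
  ext i j
  simp [indicatorMatrix, (show P j i ↔ P i j from ⟨hP j i, hP i j⟩)]

theorem le_sup_of_hadamard_mem (P : ι → ι → Prop) [DecidableRel P]
    {V : Submodule K (Matrix ι ι K)} (hV : ∀ b ∈ V, b ⊙ indicatorMatrix K P ∈ V) :
    V ≤ (supportedOn K P ⊓ V) ⊔ (supportedOn K (fun i j => ¬ P i j) ⊓ V) := by
  intro b hb
  have hsplit : b = b ⊙ indicatorMatrix K P + (b - b ⊙ indicatorMatrix K P) := by abel
  rw [hsplit]
  refine Submodule.add_mem_sup ⟨hadamard_indicatorMatrix_mem P b, hV b hb⟩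
    ⟨fun i j h => ?_, V.sub_mem hb (hV b hb)⟩
  simp [indicatorMatrix, not_not.1 h]

theorem finrank_eq_finrank_add_finrank_of_hadamard_mem [Fintype ι] (P : ι → ι → Prop)
    [DecidableRel P] {V : Submodule K (Matrix ι ι K)}
    (hV : ∀ b ∈ V, b ⊙ indicatorMatrix K P ∈ V) :
    finrank K V = finrank K ↥(supportedOn K P ⊓ V) +
      finrank K ↥(supportedOn K (fun i j => ¬ P i j) ⊓ V) := by
  have hsup : (supportedOn K P ⊓ V) ⊔ (supportedOn K (fun i j => ¬ P i j) ⊓ V) = V :=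
    le_antisymm (sup_le inf_le_right inf_le_right) (le_sup_of_hadamard_mem P hV)
  have hinf : (supportedOn K P ⊓ V) ⊓ (supportedOn K (fun i j => ¬ P i j) ⊓ V) = ⊥ :=
    (disjoint_supportedOn_not P).mono inf_le_left inf_le_left |>.eq_bot
  rw [← Submodule.finrank_sup_add_finrank_inf_eq, hsup, hinf, finrank_bot, add_zero]

theorem isCompl_supportedOn (P : ι → ι → Prop) :
    IsCompl (supportedOn K P) (supportedOn K fun i j => ¬ P i j) := by
  classical
  refine ⟨disjoint_supportedOn_not P, codisjoint_iff.2 (eq_top_iff.2 ?_)⟩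
  simpa using le_sup_of_hadamard_mem (V := ⊤) P fun _ _ => Submodule.mem_top

theorem transpose_mem_supportedOn {P : ι → ι → Prop} (hP : ∀ i j, P i j → P j i)
    {b : Matrix ι ι K} (hb : b ∈ supportedOn K P) : bᵀ ∈ supportedOn K P :=
  fun i j h => hb j i fun h' => h (hP j i h')

theorem supportedOn_diag_le_symmetricSubmodule (P : ι → ι → Prop) :
    supportedOn K (fun i j => i = j ∧ P i j) ≤ symmetricSubmodule K ι := by
  intro b hb
  change bᵀ = b
  ext i j
  by_cases h : i = j
  · subst h
    rfl
  · exact (hb j i fun h' => h h'.1.symm).trans (hb i j fun h' => h h'.1).symm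

end SupportPattern

section SymmetricSkew

variable {K ι : Type*} [Field K] [NeZero (2 : K)]

theorem eq_zero_of_mem_symmetricSubmodule_of_mem_skewSubmodule {b : Matrix ι ι K}
    (hs : b ∈ symmetricSubmodule K ι) (ha : b ∈ skewSubmodule K ι) : b = 0 := by
  have hb : b + b = 0 := by
    nth_rewrite 1 [← mem_symmetricSubmodule.1 hs, mem_skewSubmodule.1 ha]
    exact neg_add_cancel b
  rw [← two_smul K] at hb
  exact (smul_eq_zero.1 hb).resolve_left two_ne_zero

theorem supportedOn_inf_symmetric_sup_supportedOn_inf_skew {P : ι → ι → Prop}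
    (hP : ∀ i j, P i j → P j i) :
    (supportedOn K P ⊓ symmetricSubmodule K ι) ⊔ (supportedOn K P ⊓ skewSubmodule K ι) =
      supportedOn K P := by
  refine le_antisymm (sup_le inf_le_left inf_le_left) fun b hb => ?_
  have hbt := transpose_mem_supportedOn hP hb
  have hsplit : b = (2⁻¹ : K) • (b + bᵀ) + (2⁻¹ : K) • (b - bᵀ) := by
    rw [← smul_add, add_add_sub_cancel, ← two_smul K b, smul_smul,
      inv_mul_cancel₀ two_ne_zero, one_smul]
  rw [hsplit]
  refine Submodule.add_mem_sup ⟨?_, ?_⟩ ⟨?_, ?_⟩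
  · exact Submodule.smul_mem _ _ (Submodule.add_mem _ hb hbt)
  · simp [mem_symmetricSubmodule, add_comm]
  · exact Submodule.smul_mem _ _ (Submodule.sub_mem _ hb hbt)
  · simp [mem_skewSubmodule, ← smul_neg]

theorem finrank_inf_symmetric_add_finrank_inf_skew [Fintype ι] {P : ι → ι → Prop}
    (hP : ∀ i j, P i j → P j i) :
    finrank K ↥(supportedOn K P ⊓ symmetricSubmodule K ι) +
      finrank K ↥(supportedOn K P ⊓ skewSubmodule K ι) = finrank K (supportedOn K P) := by
  have hinf : (supportedOn K P ⊓ symmetricSubmodule K ι) ⊓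
      (supportedOn K P ⊓ skewSubmodule K ι) = ⊥ :=
    eq_bot_iff.2 fun b hb =>
      eq_zero_of_mem_symmetricSubmodule_of_mem_skewSubmodule hb.1.2 hb.2.2
  rw [← Submodule.finrank_sup_add_finrank_inf_eq,
    supportedOn_inf_symmetric_sup_supportedOn_inf_skew hP, hinf, finrank_bot, add_zero]

theorem supportedOn_diag_inf_skew (P : ι → ι → Prop) :
    supportedOn K (fun i j => i = j ∧ P i j) ⊓ skewSubmodule K ι = ⊥ :=
  eq_bot_iff.2 fun _ ⟨hd, hb⟩ => eq_zero_of_mem_symmetricSubmodule_of_mem_skewSubmodule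
    (supportedOn_diag_le_symmetricSubmodule P hd) hb

end SymmetricSkew

section Twist

variable {K ι : Type*} [Field K] [LinearOrder ι]

variable (K ι) in
def twistMatrix : Matrix ι ι K := of fun i j => if i ≤ j then 1 else -1

def twist : Matrix ι ι K ≃ₗ[K] Matrix ι ι K :=
  .ofInvolutive
    { toFun b := b ⊙ twistMatrix K ι
      map_add' _ _ := add_hadamard _ _ _
      map_smul' _ _ := smul_hadamard _ _ _ }
    fun b => by
      change b ⊙ twistMatrix K ι ⊙ twistMatrix K ι = b
      have hsq : twistMatrix K ι ⊙ twistMatrix K ι = of 1 := by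
        ext i j
        by_cases h : i ≤ j <;> simp [twistMatrix, h]
      rw [hadamard_assoc, hsq, hadamard_of_one]

theorem twist_apply (b : Matrix ι ι K) : twist b = b ⊙ twistMatrix K ι := rfl

theorem transpose_twist {b : Matrix ι ι K} (hb : ∀ i, b i i = 0) :
    (twist b)ᵀ = -twist bᵀ := by
  ext i j
  rcases lt_trichotomy i j with h | rfl | h
  · simp [twist_apply, twistMatrix, h.le, h.not_ge]
  · simp [twist_apply, hb]
  · simp [twist_apply, twistMatrix, h.le, h.not_ge]

theorem map_twist_supportedOn_inf_skew {P : ι → ι → Prop} (hirr : ∀ i, ¬ P i i) :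
    (supportedOn K P ⊓ skewSubmodule K ι).map (twist (K := K) (ι := ι)).toLinearMap =
      supportedOn K P ⊓ symmetricSubmodule K ι := by
  have hdiag {b : Matrix ι ι K} (hb : b ∈ supportedOn K P) (i : ι) : b i i = 0 :=
    hb i i (hirr i)
  ext b
  simp only [Submodule.mem_map, Submodule.mem_inf, LinearEquiv.coe_coe]
  constructor
  · rintro ⟨c, ⟨hcP, hc⟩, rfl⟩
    refine ⟨hadamard_mem_supportedOn hcP _, ?_⟩
    rw [mem_symmetricSubmodule, transpose_twist (hdiag hcP), mem_skewSubmodule.1 hc, map_neg,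
      neg_neg]
  · rintro ⟨hbP, hb⟩
    refine ⟨twist b, ⟨hadamard_mem_supportedOn hbP _, ?_⟩, twist.left_inv b⟩
    rw [mem_skewSubmodule, transpose_twist (hdiag hbP), mem_symmetricSubmodule.1 hb]

theorem finrank_inf_symmetric_eq_finrank_inf_skew_of_irrefl [Fintype ι] {P : ι → ι → Prop}
    (hirr : ∀ i, ¬ P i i) :
    finrank K ↥(supportedOn K P ⊓ symmetricSubmodule K ι) =
      finrank K ↥(supportedOn K P ⊓ skewSubmodule K ι) :=
  (LinearEquiv.ofSubmodules twist _ _ (map_twist_supportedOn_inf_skew hirr)).finrank_eq.symm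

end Twist

section Dimension

variable {K ι : Type*} [Field K] [Fintype ι] [LinearOrder ι] [NeZero (2 : K)]
  {P : ι → ι → Prop} [DecidableRel P]

theorem finrank_inf_symmetric_eq_finrank_inf_skew_add :
    finrank K ↥(supportedOn K P ⊓ symmetricSubmodule K ι) =
      finrank K ↥(supportedOn K P ⊓ skewSubmodule K ι) + #{i | P i i} := by
  -- Split off the diagonal: there every matrix is symmetric and none is skew, and off the
  -- diagonal `twist` matches the two spaces.
  have hdiag : ∀ i j : ι, i = j → j = i := fun _ _ => Eq.symm
  have hsym := finrank_eq_finrank_add_finrank_of_hadamard_mem (fun i j : ι => i = j)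
    (V := supportedOn K P ⊓ symmetricSubmodule K ι) fun b hb =>
      ⟨hadamard_mem_supportedOn hb.1 _,
        hadamard_mem_symmetricSubmodule hb.2 (transpose_indicatorMatrix hdiag)⟩
  have hskew := finrank_eq_finrank_add_finrank_of_hadamard_mem (fun i j : ι => i = j)
    (V := supportedOn K P ⊓ skewSubmodule K ι) fun b hb =>
      ⟨hadamard_mem_supportedOn hb.1 _,
        hadamard_mem_skewSubmodule hb.2 (transpose_indicatorMatrix hdiag)⟩
  have hoff := finrank_inf_symmetric_eq_finrank_inf_skew_of_irrefl (K := K)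
    (P := fun i j => ¬ i = j ∧ P i j) fun i h => h.1 rfl
  rw [← inf_assoc, ← inf_assoc, supportedOn_inf_supportedOn, supportedOn_inf_supportedOn,
    inf_eq_left.2 (supportedOn_diag_le_symmetricSubmodule P), finrank_supportedOn,
    card_filter_diag] at hsym
  rw [← inf_assoc, ← inf_assoc, supportedOn_inf_supportedOn, supportedOn_inf_supportedOn,
    supportedOn_diag_inf_skew, finrank_bot] at hskew
  omega

theorem two_mul_finrank_inf_symmetricSubmodule (hP : ∀ i j, P i j → P j i) :
    2 * finrank K ↥(supportedOn K P ⊓ symmetricSubmodule K ι) =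
      #{x : ι × ι | P x.1 x.2} + #{i | P i i} := by
  have := finrank_inf_symmetric_add_finrank_inf_skew (K := K) hP
  have := finrank_inf_symmetric_eq_finrank_inf_skew_add (K := K) (P := P)
  rw [finrank_supportedOn] at *
  omega

theorem two_mul_finrank_inf_skewSubmodule (hP : ∀ i j, P i j → P j i) :
    2 * finrank K ↥(supportedOn K P ⊓ skewSubmodule K ι) + #{i | P i i} =
      #{x : ι × ι | P x.1 x.2} := by
  have := finrank_inf_symmetric_add_finrank_inf_skew (K := K) hP
  have := finrank_inf_symmetric_eq_finrank_inf_skew_add (K := K) (P := P)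
  rw [finrank_supportedOn] at *
  omega

end Dimension

section Hermitian

variable {ι : Type*} [Fintype ι]

theorem re_trace_conjTranspose_mul_diagonal_mul_mul_diagonal [DecidableEq ι] (d : ι → ℝ)
    (b : Matrix ι ι ℂ) :
    (bᴴ * diagonal (fun i => (d i : ℂ)) * b * diagonal (fun i => (d i : ℂ))).trace.re =
      ∑ i, ∑ j, d i * d j * Complex.normSq (b i j) := by
  simp only [trace, Matrix.diag_apply, mul_apply, diagonal_apply, mul_ite, mul_zero,
    sum_ite_eq', mem_univ, if_true, conjTranspose_apply, Complex.re_sum, sum_mul]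
  rw [sum_comm]
  refine sum_congr rfl fun i _ => sum_congr rfl fun j _ => ?_
  rw [← Complex.ofReal_re (_ * _), Complex.ofReal_mul, Complex.normSq_eq_conj_mul_self]
  congr 1
  simp only [Complex.ofReal_mul, RCLike.star_def]
  ring

theorem sum_mul_normSq_pos {w : ι → ι → ℝ} {P : ι → ι → Prop} {b : Matrix ι ι ℂ}
    (hb : b ∈ supportedOn ℂ P) (hw : ∀ i j, P i j → 0 < w i j) (hb0 : b ≠ 0) :
    0 < ∑ i, ∑ j, w i j * Complex.normSq (b i j) := by
  obtain ⟨i, j, hij⟩ : ∃ i j, b i j ≠ 0 := by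
    by_contra! h
    exact hb0 (ext h)
  have hterm : ∀ i j, 0 ≤ w i j * Complex.normSq (b i j) := fun i j => by
    by_cases h : P i j
    · exact mul_nonneg (hw i j h).le (Complex.normSq_nonneg _)
    · simp [hb i j h]
  have hPij : P i j := by_contra fun h => hij (hb i j h)
  calc 0 < w i j * Complex.normSq (b i j) := mul_pos (hw i j hPij) (Complex.normSq_pos.2 hij)
    _ ≤ ∑ j, w i j * Complex.normSq (b i j) :=
        single_le_sum (fun j _ => hterm i j) (mem_univ j)
    _ ≤ ∑ i, ∑ j, w i j * Complex.normSq (b i j) :=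
        single_le_sum (fun i _ => sum_nonneg fun j _ => hterm i j) (mem_univ i)

end Hermitian

end Matrix

section Signature

variable (p q : ℕ)

abbrev sameSign (i j : Fin (p + q)) : Prop := (i : ℕ) < p ↔ (j : ℕ) < p

theorem sameSign_symm (i j : Fin (p + q)) : sameSign p q i j → sameSign p q j i := Iff.symm

theorem not_sameSign_symm (i j : Fin (p + q)) : ¬ sameSign p q i j → ¬ sameSign p q j i :=
  fun h h' => h h'.symm

theorem sigD_eq_diagonal :
    sigD p q = diagonal fun i : Fin (p + q) => ((if (i : ℕ) < p then 1 else -1 : ℝ) : ℂ) := by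
  unfold sigD
  congr 1
  ext i
  split_ifs <;> simp

theorem sigD_inv : (sigD p q)⁻¹ = sigD p q := by
  refine inv_eq_right_inv ?_
  rw [sigD, diagonal_mul_diagonal, ← diagonal_one]
  congr 1
  ext i
  split_ifs <;> simp

theorem re_bilFormHerm_self (b : Matrix (Fin (p + q)) (Fin (p + q)) ℂ) :
    (bilFormHerm p q b b).re =
      ∑ i, ∑ j, (if sameSign p q i j then 1 else -1) * Complex.normSq (b i j) := by
  have hconj : (b.map (starRingEnd ℂ))ᵀ = bᴴ := rfl
  rw [bilFormHerm, sigD_inv, hconj, sigD_eq_diagonal,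
    re_trace_conjTranspose_mul_diagonal_mul_mul_diagonal]
  refine sum_congr rfl fun i _ => sum_congr rfl fun j _ => ?_
  congr 1
  by_cases hi : (i : ℕ) < p <;> by_cases hj : (j : ℕ) < p <;> simp [sameSign, hi, hj]

theorem re_bilFormHerm_self_pos {b : Matrix (Fin (p + q)) (Fin (p + q)) ℂ}
    (hb : b ∈ supportedOn ℂ (sameSign p q)) (hb0 : b ≠ 0) : 0 < (bilFormHerm p q b b).re := by
  rw [re_bilFormHerm_self]
  exact sum_mul_normSq_pos hb (fun i j h => by simp only [if_pos h, zero_lt_one]) hb0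

theorem re_bilFormHerm_self_neg {b : Matrix (Fin (p + q)) (Fin (p + q)) ℂ}
    (hb : b ∈ supportedOn ℂ fun i j => ¬ sameSign p q i j) (hb0 : b ≠ 0) :
    (bilFormHerm p q b b).re < 0 := by
  rw [re_bilFormHerm_self, ← neg_pos, ← sum_neg_distrib]
  simp_rw [← sum_neg_distrib, ← neg_mul]
  exact sum_mul_normSq_pos hb (fun i j h => by simp [h]) hb0

theorem card_filter_fin_val_lt : #{i : Fin (p + q) | (i : ℕ) < p} = p := by
  simp [Fin.card_filter_val_lt]

theorem card_filter_fin_not_val_lt : #{i : Fin (p + q) | ¬ (i : ℕ) < p} = q := by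
  have := card_filter_add_card_filter_not (s := univ) fun i : Fin (p + q) => (i : ℕ) < p
  rw [Fin.card_filter_val_lt, card_univ, Fintype.card_fin] at this
  omega

theorem card_sameSign :
    #{x : Fin (p + q) × Fin (p + q) | sameSign p q x.1 x.2} = p ^ 2 + q ^ 2 := by
  rw [card_filter_iff fun i : Fin (p + q) => (i : ℕ) < p, card_filter_fin_val_lt,
    card_filter_fin_not_val_lt]

theorem card_not_sameSign :
    #{x : Fin (p + q) × Fin (p + q) | ¬ sameSign p q x.1 x.2} = 2 * (p * q) := by
  rw [card_filter_not_iff fun i : Fin (p + q) => (i : ℕ) < p, card_filter_fin_val_lt,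
    card_filter_fin_not_val_lt]

theorem finrank_sameSign_sub_finrank_not_sameSign :
    (finrank ℂ (supportedOn ℂ (sameSign p q)) : ℤ) -
      finrank ℂ (supportedOn ℂ fun i j => ¬ sameSign p q i j) = ((p : ℤ) - q) ^ 2 := by
  rw [finrank_supportedOn, finrank_supportedOn, card_sameSign, card_not_sameSign]
  push_cast
  ring

theorem two_mul_finrank_symmetric_sameSign_sub :
    2 * ((finrank ℂ ↥(supportedOn ℂ (sameSign p q) ⊓ symmetricSubmodule ℂ _) : ℤ) -
      finrank ℂ ↥(supportedOn ℂ (fun i j => ¬ sameSign p q i j) ⊓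
        symmetricSubmodule ℂ _)) = ((p : ℤ) - q) ^ 2 + (p + q : ℤ) := by
  have hpos := two_mul_finrank_inf_symmetricSubmodule (K := ℂ) (sameSign_symm p q)
  have hneg := two_mul_finrank_inf_symmetricSubmodule (K := ℂ) (not_sameSign_symm p q)
  rw [card_sameSign] at hpos
  rw [card_not_sameSign] at hneg
  simp only [iff_self, not_true_eq_false, filter_true, filter_false, card_univ, Fintype.card_fin,
    card_empty, add_zero] at hpos hneg
  zify at hpos hneg
  linear_combination hpos - hneg

theorem two_mul_finrank_skew_sameSign_sub :
    2 * ((finrank ℂ ↥(supportedOn ℂ (sameSign p q) ⊓ skewSubmodule ℂ _) : ℤ) -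
      finrank ℂ ↥(supportedOn ℂ (fun i j => ¬ sameSign p q i j) ⊓ skewSubmodule ℂ _)) =
        ((p : ℤ) - q) ^ 2 - (p + q : ℤ) := by
  have hpos := two_mul_finrank_inf_skewSubmodule (K := ℂ) (sameSign_symm p q)
  have hneg := two_mul_finrank_inf_skewSubmodule (K := ℂ) (not_sameSign_symm p q)
  rw [card_sameSign] at hpos
  rw [card_not_sameSign] at hneg
  simp only [iff_self, not_true_eq_false, filter_true, filter_false, card_univ, Fintype.card_fin,
    card_empty, add_zero] at hpos hneg
  zify at hpos hneg
  linear_combination hpos - hneg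

end Signature

/-- With `s = p − q` and `n = p + q`, the Hermitian form
`S(b,b') = Trace(conj(b)ᵀ D⁻¹ b' D⁻¹)` on `Mat_n(ℂ)` has signature `s²`; restricted to
symmetric matrices it has signature `(s² + n)/2`, and restricted to skew-symmetric matrices
it has signature `(s² − n)/2`. -/
theorem stmt_14 (p q : ℕ) :
    -- (a) signature on all of `Mat_n(ℂ)` is `s²`
    (∃ Wp Wn : Submodule ℂ (Matrix (Fin (p + q)) (Fin (p + q)) ℂ), IsCompl Wp Wn ∧
      (∀ b ∈ Wp, b ≠ 0 → 0 < (bilFormHerm p q b b).re) ∧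
      (∀ b ∈ Wn, b ≠ 0 → (bilFormHerm p q b b).re < 0) ∧
      (finrank ℂ Wp : ℤ) - (finrank ℂ Wn : ℤ) = ((p : ℤ) - q) ^ 2) ∧
    -- (b) signature on symmetric matrices is `(s² + n)/2`
    (∃ Wp Wn : Submodule ℂ (Matrix (Fin (p + q)) (Fin (p + q)) ℂ),
      (∀ b ∈ Wp, bᵀ = b) ∧ (∀ b ∈ Wn, bᵀ = b) ∧ Disjoint Wp Wn ∧
      (∀ b : Matrix (Fin (p + q)) (Fin (p + q)) ℂ, bᵀ = b → b ∈ Wp ⊔ Wn) ∧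
      (∀ b ∈ Wp, b ≠ 0 → 0 < (bilFormHerm p q b b).re) ∧
      (∀ b ∈ Wn, b ≠ 0 → (bilFormHerm p q b b).re < 0) ∧
      2 * ((finrank ℂ Wp : ℤ) - (finrank ℂ Wn : ℤ)) = ((p : ℤ) - q) ^ 2 + (p + q : ℤ)) ∧
    -- (c) signature on skew-symmetric matrices is `(s² − n)/2`
    (∃ Wp Wn : Submodule ℂ (Matrix (Fin (p + q)) (Fin (p + q)) ℂ),
      (∀ b ∈ Wp, bᵀ = -b) ∧ (∀ b ∈ Wn, bᵀ = -b) ∧ Disjoint Wp Wn ∧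
      (∀ b : Matrix (Fin (p + q)) (Fin (p + q)) ℂ, bᵀ = -b → b ∈ Wp ⊔ Wn) ∧
      (∀ b ∈ Wp, b ≠ 0 → 0 < (bilFormHerm p q b b).re) ∧
      (∀ b ∈ Wn, b ≠ 0 → (bilFormHerm p q b b).re < 0) ∧
      2 * ((finrank ℂ Wp : ℤ) - (finrank ℂ Wn : ℤ)) = ((p : ℤ) - q) ^ 2 - (p + q : ℤ)) := by
  have hdisj {V W : Submodule ℂ (Matrix (Fin (p + q)) (Fin (p + q)) ℂ)} :
      Disjoint (supportedOn ℂ (sameSign p q) ⊓ V)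
        (supportedOn ℂ (fun i j => ¬ sameSign p q i j) ⊓ W) :=
    (disjoint_supportedOn_not _).mono inf_le_left inf_le_left
  have hmask := transpose_indicatorMatrix (K := ℂ) (sameSign_symm p q)
  have hsym := le_sup_of_hadamard_mem _ fun _ hb => hadamard_mem_symmetricSubmodule hb hmask
  have hskew := le_sup_of_hadamard_mem _ fun _ hb => hadamard_mem_skewSubmodule hb hmask
  refine ⟨⟨_, _, isCompl_supportedOn _, fun _ => re_bilFormHerm_self_pos p q,
      fun _ => re_bilFormHerm_self_neg p q, finrank_sameSign_sub_finrank_not_sameSign p q⟩,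
    ⟨_ ⊓ symmetricSubmodule ℂ _, _ ⊓ symmetricSubmodule ℂ _, fun _ hb => hb.2,
      fun _ hb => hb.2, hdisj, fun _ hb => hsym hb,
      fun _ hb => re_bilFormHerm_self_pos p q hb.1, fun _ hb => re_bilFormHerm_self_neg p q hb.1,
      two_mul_finrank_symmetric_sameSign_sub p q⟩,
    ⟨_ ⊓ skewSubmodule ℂ _, _ ⊓ skewSubmodule ℂ _, fun _ hb => hb.2,
      fun _ hb => hb.2, hdisj, fun _ hb => hskew hb,
      fun _ hb => re_bilFormHerm_self_pos p q hb.1, fun _ hb => re_bilFormHerm_self_neg p q hb.1,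
      two_mul_finrank_skew_sameSign_sub p q⟩⟩
end
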